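/- arXiv:1907.01965 — 11 statements merged into one kernel-verified Lean document; each statement's English description precedes it below -/
import Mathlib

section
/- For every convex cone C ⊆ ℝ^p with ℝ^p_+ \ {0} ⊆ int(C), there exists δ > 0 such that ℝ^p_+ ⊆ C_δ ⊆ C, where C_δ = {y ∈ ℝ^p : ⟨e^i + δe, y⟩ ≥ 0 for i = 1,…,p}. -/
def Pos (p : ℕ) : Set (Fin p → ℝ) := {y | ∀ i, 0 ≤ y i}

def Efficient {α : Type*} {p : ℕ} (X : Set α) (f : α → Fin p → ℝ) (xb : α) : Prop :=
  xb ∈ X ∧ ¬ ∃ x ∈ X, (∀ i, f x i ≤ f xb i) ∧ f x ≠ f xb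

def GeoffrionProper {α : Type*} {p : ℕ} (X : Set α) (f : α → Fin p → ℝ) (xb : α) : Prop :=
  Efficient X f xb ∧ ∃ M : ℝ, 0 < M ∧ ∀ i : Fin p, ∀ x ∈ X, f x i < f xb i →
    ∃ j : Fin p, f xb j < f x j ∧ (f xb i - f x i) / (f x j - f xb j) ≤ M

def coneHull {p : ℕ} (A : Set (Fin p → ℝ)) : Set (Fin p → ℝ) :=
  {y | ∃ t : ℝ, 0 ≤ t ∧ ∃ a ∈ A, y = t • a}

def BensonProper {α : Type*} {p : ℕ} (X : Set α) (f : α → Fin p → ℝ) (xb : α) : Prop :=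
  xb ∈ X ∧
    closure (coneHull {y | ∃ x ∈ X, ∃ d ∈ Pos p, y = f x + d - f xb}) ∩ (-(Pos p)) = {0}

def HenigProper {α : Type*} {p : ℕ} (X : Set α) (f : α → Fin p → ℝ) (xb : α) : Prop :=
  xb ∈ X ∧ ∃ C : Set (Fin p → ℝ),
    Convex ℝ C ∧ (∀ t : ℝ, 0 ≤ t → ∀ c ∈ C, t • c ∈ C) ∧ (C ∩ (-C) ⊆ {0}) ∧
    (Pos p \ {0} ⊆ interior C) ∧ ((f '' X) ∩ ((fun c => f xb - c) '' C) = {f xb})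

def Cdelta (p : ℕ) (δ : ℝ) : Set (Fin p → ℝ) :=
  {y | ∀ i : Fin p, 0 ≤ y i + δ * ∑ j, y j}


lemma cone_sum_mem {p : ℕ} {C : Set (Fin p → ℝ)} (hconv : Convex ℝ C)
    (hcone : ∀ t : ℝ, 0 ≤ t → ∀ c ∈ C, t • c ∈ C) (hC0 : (0 : Fin p → ℝ) ∈ C)
    (t : Fin p → ℝ) (ht : ∀ k, 0 ≤ t k) (v : Fin p → Fin p → ℝ) (hv : ∀ k, v k ∈ C) :
    ∑ k, t k • v k ∈ C := by
  set T := ∑ k, t k with hT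
  rcases eq_or_lt_of_le (Finset.sum_nonneg (fun k _ => ht k) : (0:ℝ) ≤ T) with h0 | hpos
  · have hall : ∀ k ∈ Finset.univ, t k = 0 :=
      (Finset.sum_eq_zero_iff_of_nonneg (fun k _ => ht k)).1 h0.symm
    have : ∑ k, t k • v k = 0 := Finset.sum_eq_zero (fun k hk => by rw [hall k hk, zero_smul])
    rw [this]; exact hC0
  · have hmem : ∑ k, (t k / T) • v k ∈ C := by
      apply hconv.sum_mem (fun k _ => div_nonneg (ht k) hpos.le)
      · rw [← Finset.sum_div, ← hT, div_self hpos.ne']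
      · exact fun k _ => hv k
    have := hcone T hpos.le _ hmem
    rw [Finset.smul_sum] at this
    have heq : ∑ k, T • (t k / T) • v k = ∑ k, t k • v k :=
      Finset.sum_congr rfl (fun k _ => by
        rw [smul_smul]; congr 1; field_simp; exact mul_div_cancel_left₀ (t k) hpos.ne')
    rwa [heq] at this
  
theorem stmt3 {p : ℕ} (hp : 2 ≤ p) (C : Set (Fin p → ℝ))
    (hconv : Convex ℝ C) (hcone : ∀ t : ℝ, 0 ≤ t → ∀ c ∈ C, t • c ∈ C)
    (hint : Pos p \ {0} ⊆ interior C) :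
    ∃ δ : ℝ, 0 < δ ∧ Pos p ⊆ Cdelta p δ ∧ Cdelta p δ ⊆ C := by
  have hpemp : Nonempty (Fin p) := ⟨⟨0, by omega⟩⟩
  -- each standard basis vector is in the interior of C
  have hek : ∀ k : Fin p, Pi.single k (1:ℝ) ∈ interior C := by
    intro k
    apply hint
    constructor
    · intro i
      rcases eq_or_ne i k with rfl | h
      · simp
      · simp [Pi.single_apply, h]
    · intro h
      have := congrFun (Set.mem_singleton_iff.mp h) k
      simp at this
  have h1 : ∀ k : Fin p, ∃ ε > 0, Metric.ball (Pi.single k (1:ℝ)) ε ⊆ C := by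
    intro k
    obtain ⟨ε, hε, hball⟩ := Metric.isOpen_iff.1 isOpen_interior _ (hek k)
    exact ⟨ε, hε, hball.trans interior_subset⟩
  choose ε hε hball using h1
  have hC0 : (0 : Fin p → ℝ) ∈ C := by
    have := interior_subset (hek ⟨0, by omega⟩)
    simpa using hcone 0 le_rfl _ this
  set E := Finset.univ.inf' (Finset.univ_nonempty) ε with hE
  have hEpos : 0 < E := by
    rw [hE, Finset.lt_inf'_iff]
    exact fun k _ => hε k
  refine ⟨E / (2 * (p + 1)), by positivity, ?_, ?_⟩
  · intro y hy i
    have hs : (0:ℝ) ≤ ∑ j, y j := Finset.sum_nonneg (fun j _ => hy j)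
    have := hy i
    positivity
  · set δ : ℝ := E / (2 * (p + 1)) with hδ
    have hδpos : 0 < δ := by positivity
    -- generators
    set v : Fin p → Fin p → ℝ := fun k i => (if i = k then (1:ℝ) + p * δ else 0) - δ with hv
    have hvC : ∀ k, v k ∈ C := by
      intro k
      apply hball k
      rw [Metric.mem_ball]
      have hp1 : (1:ℝ) ≤ (p:ℝ) := by exact_mod_cast (by omega : 1 ≤ p)
      have hle : dist (v k) (Pi.single k (1:ℝ)) ≤ p * δ := by
        rw [dist_pi_le_iff (by nlinarith [hδpos.le])]
        intro i
        rcases eq_or_ne i k with rfl | h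
        · simp only [hv, eq_self_iff_true, if_true, Pi.single_eq_same, Real.dist_eq]
          rw [abs_of_nonneg (by nlinarith [hδpos.le])]
          nlinarith [hδpos.le]
        · simp only [hv, if_neg h, Pi.single_apply, if_neg h, Real.dist_eq]
          rw [zero_sub, sub_zero, abs_neg, abs_of_nonneg hδpos.le]
          nlinarith [hδpos.le]
      have hlt : (p:ℝ) * δ < E := by
        have hdm : δ * (2 * ((p:ℝ) + 1)) = E := div_mul_cancel₀ _ (by positivity)
        nlinarith [hδpos, mul_nonneg (by linarith : (0:ℝ) ≤ (p:ℝ)) hδpos.le]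
      calc dist (v k) (Pi.single k (1:ℝ)) ≤ p * δ := hle
        _ < E := hlt
        _ ≤ ε k := Finset.inf'_le _ (Finset.mem_univ k)
    intro y hy
    set S := ∑ j, y j with hS
    set t : Fin p → ℝ := fun k => y k + δ * S with ht
    have htn : ∀ k, 0 ≤ t k := hy
    have hsumt : ∑ k, t k = (1 + p * δ) * S := by
      simp only [ht, Finset.sum_add_distrib, Finset.sum_const, Finset.card_univ,
        Fintype.card_fin, nsmul_eq_mul, ← hS]
      ring
    have key : ∑ k, t k • v k = (1 + p * δ) • y := by
      funext i
      have : (∑ k, t k • v k) i = ∑ k, t k * ((if i = k then (1:ℝ) + p * δ else 0) - δ) := by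
        simp [hv, Finset.sum_apply]
      rw [this]
      have : ∑ k, t k * ((if i = k then (1:ℝ) + p * δ else 0) - δ)
          = (∑ k, t k * (if i = k then (1:ℝ) + p * δ else 0)) - (∑ k, t k) * δ := by
        rw [Finset.sum_mul]
        rw [← Finset.sum_sub_distrib]
        congr 1; funext k; ring
      rw [this, hsumt]
      have : ∑ k, t k * (if i = k then (1:ℝ) + p * δ else 0) = t i * (1 + p * δ) := by
        rw [Finset.sum_eq_single i]
        · simp
        · intro k _ hk
          simp [Ne.symm hk]
        · intro h; exact absurd (Finset.mem_univ i) h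
      rw [this, ht]
      simp only [Pi.smul_apply, smul_eq_mul]
      ring
    have hmem : (1 + p * δ) • y ∈ C := by
      rw [← key]
      exact cone_sum_mem hconv hcone hC0 t htn v hvC
    have h1p : (0:ℝ) < 1 + p * δ := by positivity
    have := hcone (1 + p * δ)⁻¹ (by positivity) _ hmem
    rwa [smul_smul, inv_mul_cancel₀ h1p.ne', one_smul] at this
end

section
/- Let λ ∈ int(ℝ^p_+). Then every optimal solution of the weighted sum problem min_{x∈X} λ^T f(x) is a properly efficient solution of the multi-objective problem min_{x∈X} f(x) in Geoffrion's sense. -/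
theorem stmt6 {α : Type*} {p : ℕ} (hp : 2 ≤ p) (X : Set α) (f : α → Fin p → ℝ)
    (lam : Fin p → ℝ) (hlam : ∀ i, 0 < lam i)
    (xb : α) (hxb : xb ∈ X)
    (hopt : ∀ x ∈ X, ∑ i, lam i * f xb i ≤ ∑ i, lam i * f x i) :
    GeoffrionProper X f xb := by
  haveI : NeZero p := ⟨by omega⟩
  have hne : (Finset.univ : Finset (Fin p)).Nonempty := Finset.univ_nonempty
  set A := Finset.univ.sup' hne lam with hA
  set B := Finset.univ.inf' hne lam with hBdef
  have hB : 0 < B := (Finset.lt_inf'_iff hne).2 fun b _ => hlam b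
  have hAB : 0 < A := lt_of_lt_of_le (lt_of_lt_of_le hB (Finset.inf'_le lam (Finset.mem_univ (Classical.arbitrary (Fin p))))) (Finset.le_sup' lam (Finset.mem_univ _))
  have hp1 : (1:ℝ) ≤ (p:ℝ) - 1 := by
    have : (2:ℝ) ≤ (p:ℝ) := by exact_mod_cast hp
    linarith
  constructor
  · refine ⟨hxb, ?_⟩
    rintro ⟨x, hxX, hle, hnef⟩
    have hk : ∃ k, f x k ≠ f xb k := by
      by_contra h
      push_neg at h
      exact hnef (funext h)
    obtain ⟨k, hk⟩ := hk
    have hlt : ∑ i, lam i * f x i < ∑ i, lam i * f xb i := by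
      refine Finset.sum_lt_sum (fun i _ => ?_) ⟨k, Finset.mem_univ k, ?_⟩
      · exact mul_le_mul_of_nonneg_left (hle i) (hlam i).le
      · exact mul_lt_mul_of_pos_left (lt_of_le_of_ne (hle k) hk) (hlam k)
    exact absurd (hopt x hxX) (not_le.2 hlt)
  · refine ⟨((p:ℝ) - 1) * A / B, by positivity, ?_⟩
    intro i x hxX hlt
    set g : Fin p → ℝ := fun k => lam k * (f x k - f xb k) with hg
    have hsum : 0 ≤ ∑ k, g k := by
      have := hopt x hxX
      simp only [hg, mul_sub, Finset.sum_sub_distrib]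
      linarith
    have hgi : g i < 0 := mul_neg_of_pos_of_neg (hlam i) (by linarith)
    set s := Finset.univ.erase i with hs
    have hsplit : ∑ k ∈ s, g k + g i = ∑ k, g k :=
      Finset.sum_erase_add _ _ (Finset.mem_univ i)
    have hS : -g i ≤ ∑ k ∈ s, g k := by linarith
    have hcard : (s.card : ℝ) = (p:ℝ) - 1 := by
      have : s.card = p - 1 := by
        rw [hs, Finset.card_erase_of_mem (Finset.mem_univ i)]
        simp
      rw [this]
      have : (1:ℕ) ≤ p := by omega
      push_cast [Nat.cast_sub this]
      ring
    set c : ℝ := (∑ k ∈ s, g k) / ((p:ℝ) - 1) with hc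
    have hcpos : 0 < c := div_pos (by linarith) (by linarith)
    have hsne : s.Nonempty := by
      rw [← Finset.card_pos]
      have : s.card = p - 1 := by
        rw [hs, Finset.card_erase_of_mem (Finset.mem_univ i)]
        simp
      omega
    have hj : ∃ j ∈ s, c ≤ g j := by
      by_contra h
      push_neg at h
      have : ∑ k ∈ s, g k < ∑ k ∈ s, c :=
        Finset.sum_lt_sum_of_nonempty hsne h
      rw [Finset.sum_const, nsmul_eq_mul, hcard, hc] at this
      rw [mul_div_cancel₀] at this
      · exact lt_irrefl _ this
      · linarith
    obtain ⟨j, hjs, hcj⟩ := hj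
    have hgj : 0 < g j := lt_of_lt_of_le hcpos hcj
    have hfj : f xb j < f x j := by
      by_contra h
      push_neg at h
      have : g j ≤ 0 := mul_nonpos_of_nonneg_of_nonpos (hlam j).le (by linarith)
      linarith
    refine ⟨j, hfj, ?_⟩
    have hsum_le : ∑ k ∈ s, g k ≤ ((p:ℝ) - 1) * g j := by
      have : ∑ k ∈ s, g k = ((p:ℝ) - 1) * c := by
        rw [hc, mul_div_cancel₀]; linarith
      rw [this]
      exact mul_le_mul_of_nonneg_left hcj (by linarith)
    have key : lam i * (f xb i - f x i) ≤ ((p:ℝ) - 1) * (lam j * (f x j - f xb j)) := by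
      have : lam i * (f xb i - f x i) = -g i := by rw [hg]; ring
      rw [this]
      calc -g i ≤ ∑ k ∈ s, g k := hS
        _ ≤ ((p:ℝ) - 1) * g j := hsum_le
    rw [div_le_div_iff₀ (by linarith) hB]
    have hlamjA : lam j ≤ A := Finset.le_sup' lam (Finset.mem_univ j)
    have hBlami : B ≤ lam i := Finset.inf'_le lam (Finset.mem_univ i)
    have h1 : B * (f xb i - f x i) ≤ lam i * (f xb i - f x i) :=
      mul_le_mul_of_nonneg_right hBlami (by linarith)
    have h2 : ((p:ℝ) - 1) * (lam j * (f x j - f xb j)) ≤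
        ((p:ℝ) - 1) * (A * (f x j - f xb j)) := by
      apply mul_le_mul_of_nonneg_left _ (by linarith)
      exact mul_le_mul_of_nonneg_right hlamjA (by linarith)
    nlinarith
end

section
/- Let λ ∈ int(ℝ^p_+), y^r ∈ ℝ^p and 0 ≤ α < min_i λ_i. Then every optimal solution of min_{x∈X} [ Σ_i λ_i (f_i(x) − y^r_i) + α Σ_i |f_i(x) − y^r_i| ] is a properly efficient solution of min_{x∈X} f(x) in Benson's sense. -/
theorem stmt7 {α : Type*} {p : ℕ} (hp : 2 ≤ p) (X : Set α) (f : α → Fin p → ℝ)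
    (lam : Fin p → ℝ) (hlam : ∀ i, 0 < lam i)
    (yr : Fin p → ℝ) (a : ℝ) (ha : 0 ≤ a) (haup : ∀ i, a < lam i)
    (xb : α) (hxb : xb ∈ X)
    (hopt : ∀ x ∈ X,
      (∑ i, lam i * (f xb i - yr i)) + a * ∑ i, |f xb i - yr i| ≤
      (∑ i, lam i * (f x i - yr i)) + a * ∑ i, |f x i - yr i|) :
    BensonProper X f xb := by
  classical
  set φ : (Fin p → ℝ) → ℝ := fun z => (∑ i, lam i * z i) + a * ∑ i, |z i| with hφ
  have hcont : Continuous φ := by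
    apply Continuous.add
    · exact continuous_finset_sum _ fun i _ => (continuous_const.mul (continuous_apply i))
    · exact continuous_const.mul
        (continuous_finset_sum _ fun i _ => (continuous_apply i).abs)
  set A : Set (Fin p → ℝ) := {y | ∃ x ∈ X, ∃ d ∈ Pos p, y = f x + d - f xb} with hAdef
  have hA : ∀ y ∈ A, 0 ≤ φ y := by
    rintro y ⟨x, hx, d, hd, rfl⟩
    have h1 := hopt x hx
    have h2 : ∀ i : Fin p,
        (lam i * (f x i - yr i) + a * |f x i - yr i|)
          - (lam i * (f xb i - yr i) + a * |f xb i - yr i|)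
        ≤ lam i * ((f x + d - f xb) i) + a * |(f x + d - f xb) i| := by
      intro i
      have hdi := hd i
      have hui : (f x + d - f xb) i = f x i + d i - f xb i := by
        simp [Pi.add_apply, Pi.sub_apply]
      set u := f x i + d i - f xb i with hu
      have habs : |f x i - yr i| ≤ |u| + |f xb i - yr i| + d i := by
        apply abs_le.mpr
        constructor
        · have := neg_abs_le u
          have := neg_abs_le (f xb i - yr i)
          nlinarith
        · have := le_abs_self u
          have := le_abs_self (f xb i - yr i)
          nlinarith
      have hmul : a * |f x i - yr i| ≤ a * (|u| + |f xb i - yr i| + d i) :=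
        mul_le_mul_of_nonneg_left habs ha
      have hld : a * d i ≤ lam i * d i :=
        mul_le_mul_of_nonneg_right (le_of_lt (haup i)) hdi
      have hlin : lam i * (f x i - yr i) - lam i * (f xb i - yr i)
          = lam i * u - lam i * d i := by rw [hu]; ring
      rw [hui]
      linarith
    have hsum := Finset.sum_le_sum (fun i (_ : i ∈ Finset.univ) => h2 i)
    have e1 : ∑ i, ((lam i * (f x i - yr i) + a * |f x i - yr i|)
          - (lam i * (f xb i - yr i) + a * |f xb i - yr i|))
        = ((∑ i, lam i * (f x i - yr i)) + a * ∑ i, |f x i - yr i|)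
          - ((∑ i, lam i * (f xb i - yr i)) + a * ∑ i, |f xb i - yr i|) := by
      rw [Finset.sum_sub_distrib, Finset.sum_add_distrib, Finset.sum_add_distrib,
        Finset.mul_sum, Finset.mul_sum]
    have e2 : ∑ i, (lam i * ((f x + d - f xb) i) + a * |(f x + d - f xb) i|)
        = φ (f x + d - f xb) := by
      simp only [hφ, Finset.mul_sum, Finset.sum_add_distrib]
    rw [e1, e2] at hsum
    linarith
  have hcone : ∀ y ∈ coneHull A, 0 ≤ φ y := by
    rintro y ⟨t, ht, z, hz, rfl⟩
    have hφz : φ (t • z) = t * φ z := by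
      simp only [hφ, Pi.smul_apply, smul_eq_mul, abs_mul, abs_of_nonneg ht]
      have h1 : ∑ i, lam i * (t * z i) = t * ∑ i, lam i * z i := by
        rw [Finset.mul_sum]; exact Finset.sum_congr rfl fun i _ => by ring
      have h2 : ∑ i, t * |z i| = t * ∑ i, |z i| := (Finset.mul_sum _ _ _).symm
      rw [h1, h2]; ring
    rw [hφz]
    exact mul_nonneg ht (hA z hz)
  have hclos : closure (coneHull A) ⊆ {y | 0 ≤ φ y} := by
    apply closure_minimal hcone
    exact isClosed_le continuous_const hcont
  refine ⟨hxb, ?_⟩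
  ext z
  simp only [Set.mem_inter_iff, Set.mem_singleton_iff]
  constructor
  · rintro ⟨hz1, hz2⟩
    have hφz : 0 ≤ φ z := hclos hz1
    have hzneg : ∀ i, z i ≤ 0 := by
      intro i
      have : -z ∈ Pos p := Set.mem_neg.mp hz2
      have := this i
      simp only [Pi.neg_apply] at this
      linarith
    have habsz : ∀ i, |z i| = -(z i) := fun i => abs_of_nonpos (hzneg i)
    have hφeq : φ z = ∑ i, (lam i - a) * z i := by
      simp only [hφ]
      rw [Finset.mul_sum, ← Finset.sum_add_distrib]
      exact Finset.sum_congr rfl fun i _ => by rw [habsz i]; ring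
    have hterm : ∀ i ∈ Finset.univ, (lam i - a) * z i ≤ 0 := fun i _ =>
      mul_nonpos_of_nonneg_of_nonpos (by linarith [haup i]) (hzneg i)
    have hzero : ∀ i ∈ Finset.univ, (lam i - a) * z i = 0 := by
      apply (Finset.sum_eq_zero_iff_of_nonpos hterm).mp
      have hle : ∑ i, (lam i - a) * z i ≤ 0 := Finset.sum_nonpos hterm
      linarith [hφeq ▸ hφz]
    funext i
    have := hzero i (Finset.mem_univ i)
    have hne : lam i - a ≠ 0 := by have := haup i; intro h; linarith
    have : z i = 0 := by
      rcases mul_eq_zero.mp this with h | h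
      · exact absurd h hne
      · exact h
    simpa using this
  · rintro rfl
    refine ⟨subset_closure ⟨0, le_refl 0, f xb + 0 - f xb, ⟨xb, hxb, 0, fun i => le_refl 0, by simp⟩, by simp⟩, ?_⟩
    simp only [Set.mem_neg, neg_zero]
    intro i
    simp [Pos]
end

section
/- Let λ ∈ int(ℝ^p_+), α > 0, and y^U ∈ ℝ^p with y^U_i < f_i(x) for all x ∈ X and all i. Then every optimal solution of min_{x∈X} max_i { λ_i (f_i(x) − y^U_i) + α e^T (f(x) − y^U) } is a properly efficient solution of min_{x∈X} f(x) in Benson's sense. -/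
theorem stmt8 {α : Type*} {p : ℕ} [NeZero p] (hp : 2 ≤ p) (X : Set α) (f : α → Fin p → ℝ)
    (lam : Fin p → ℝ) (hlam : ∀ i, 0 < lam i) (a : ℝ) (ha : 0 < a)
    (yU : Fin p → ℝ) (hyU : ∀ x ∈ X, ∀ i, yU i < f x i)
    (xb : α) (hxb : xb ∈ X)
    (hopt : ∀ x ∈ X,
      (⨆ i : Fin p, (lam i * (f xb i - yU i) + a * ∑ j, (f xb j - yU j))) ≤
      (⨆ i : Fin p, (lam i * (f x i - yU i) + a * ∑ j, (f x j - yU j)))) :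
    BensonProper X f xb := by
  have hne : Nonempty (Fin p) := ⟨⟨0, Nat.pos_of_ne_zero (NeZero.ne p)⟩⟩
  set A : Set (Fin p → ℝ) := {y | ∃ x ∈ X, ∃ d ∈ Pos p, y = f x + d - f xb} with hA
  have hCclosed : IsClosed {y : Fin p → ℝ | ∃ i, 0 ≤ lam i * y i + a * ∑ j, y j} := by
    have : {y : Fin p → ℝ | ∃ i, 0 ≤ lam i * y i + a * ∑ j, y j}
        = ⋃ i, {y : Fin p → ℝ | 0 ≤ lam i * y i + a * ∑ j, y j} := by
      ext y; simp [Set.mem_iUnion]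
    rw [this]
    exact isClosed_iUnion_of_finite fun i =>
      isClosed_le continuous_const
        ((continuous_const.mul (continuous_apply i)).add
          (continuous_const.mul (continuous_finset_sum _ fun j _ => continuous_apply j)))
  have hSC : coneHull A ⊆ {y : Fin p → ℝ | ∃ i, 0 ≤ lam i * y i + a * ∑ j, y j} := by
    rintro y ⟨t, ht, w, ⟨x, hx, d, hd, rfl⟩, rfl⟩
    obtain ⟨k, hk⟩ := Finite.exists_max (fun i => lam i * (f x i - yU i))
    have hbdd : BddAbove (Set.range fun i : Fin p =>
        lam i * (f xb i - yU i) + a * ∑ j, (f xb j - yU j)) :=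
      (Set.finite_range _).bddAbove
    have h1 : (⨆ i : Fin p, (lam i * (f xb i - yU i) + a * ∑ j, (f xb j - yU j))) ≤
        lam k * (f x k - yU k) + a * ∑ j, (f x j - yU j) :=
      (hopt x hx).trans (ciSup_le fun i => add_le_add (hk i) le_rfl)
    have h2 : lam k * (f xb k - yU k) + a * ∑ j, (f xb j - yU j) ≤
        ⨆ i : Fin p, (lam i * (f xb i - yU i) + a * ∑ j, (f xb j - yU j)) :=
      le_ciSup hbdd k
    have h3 := h2.trans h1
    have hs : ∑ j, (f x j - f xb j) = (∑ j, (f x j - yU j)) - ∑ j, (f xb j - yU j) := by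
      rw [← Finset.sum_sub_distrib]; apply Finset.sum_congr rfl; intros; ring
    have hkey : 0 ≤ lam k * (f x k - f xb k) + a * ∑ j, (f x j - f xb j) := by
      rw [hs, mul_sub a]
      have e1 : lam k * (f x k - f xb k)
          = lam k * (f x k - yU k) - lam k * (f xb k - yU k) := by ring
      rw [e1]; linarith
    refine ⟨k, ?_⟩
    have hwk : (f x + d - f xb) k = (f x k - f xb k) + d k := by
      simp [Pi.add_apply, Pi.sub_apply]; ring
    have hws : ∑ j, (f x + d - f xb) j = (∑ j, (f x j - f xb j)) + ∑ j, d j := by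
      rw [← Finset.sum_add_distrib]; apply Finset.sum_congr rfl; intros
      simp [Pi.add_apply, Pi.sub_apply]; ring
    have hdk : 0 ≤ lam k * d k := mul_nonneg (hlam k).le (hd k)
    have hds : 0 ≤ a * ∑ j, d j :=
      mul_nonneg ha.le (Finset.sum_nonneg fun j _ => hd j)
    have hinner : 0 ≤ lam k * (f x + d - f xb) k + a * ∑ j, (f x + d - f xb) j := by
      rw [hwk, hws]; nlinarith
    have e2 : ∑ j, (t • (f x + d - f xb)) j = t * ∑ j, (f x + d - f xb) j := by
      simp only [Pi.smul_apply, smul_eq_mul]; rw [Finset.mul_sum]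
    have e3 : (t • (f x + d - f xb)) k = t * (f x + d - f xb) k := rfl
    have : lam k * (t • (f x + d - f xb)) k + a * ∑ j, (t • (f x + d - f xb)) j
        = t * (lam k * (f x + d - f xb) k + a * ∑ j, (f x + d - f xb) j) := by
      rw [e2, e3]; ring
    rw [this]
    exact mul_nonneg ht hinner
  have hclC : closure (coneHull A) ⊆ {y : Fin p → ℝ | ∃ i, 0 ≤ lam i * y i + a * ∑ j, y j} :=
    closure_minimal hSC hCclosed
  refine ⟨hxb, ?_⟩
  ext d
  constructor
  · rintro ⟨hd1, hd2⟩
    obtain ⟨i, hi⟩ := hclC hd1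
    have hdneg : ∀ j, d j ≤ 0 := by
      intro j
      have := (Set.mem_neg.mp hd2) j
      simpa using this
    have hli : lam i * d i ≤ 0 := mul_nonpos_of_nonneg_of_nonpos (hlam i).le (hdneg i)
    have hsumle : ∑ j, d j ≤ 0 := Finset.sum_nonpos fun j _ => hdneg j
    have hsum0 : ∑ j, d j = 0 := by nlinarith
    have := (Finset.sum_eq_zero_iff_of_nonpos (fun j _ => hdneg j)).mp hsum0
    funext j
    exact this j (Finset.mem_univ j)
  · rintro rfl
    constructor
    · apply subset_closure
      exact ⟨0, le_refl 0, f xb + 0 - f xb, ⟨xb, hxb, 0, fun i => le_refl 0, rfl⟩,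
        by simp⟩
    · intro i
      simp [Pos]
end

section
/- Let Y ⊆ ℝ^p with f(X) ⊆ Y, let U be a parameter set and g : Y × U → ℝ ∪ {+∞}. Suppose that for each ȳ ∈ Y and each δ > 0 there exists u ∈ U with {y ∈ Y : g(y,u) < g(ȳ,u)} ⊆ ȳ − C_δ, where C_δ = {y : ⟨e^i + δe, y⟩ ≥ 0, i = 1,…,p}. Then every Henig properly efficient solution x̂ of min_{x∈X} f(x) is an optimal solution of min_{x∈X} g(f(x), u) for some u ∈ U. -/
theorem stmt9 {α : Type*} {p : ℕ} (hp : 2 ≤ p) (X : Set α) (f : α → Fin p → ℝ)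
    (Y : Set (Fin p → ℝ)) (hfY : ∀ x ∈ X, f x ∈ Y)
    (U : Type*) (g : (Fin p → ℝ) → U → EReal)
    (hcond : ∀ yb ∈ Y, ∀ δ : ℝ, 0 < δ → ∃ u : U,
      {y ∈ Y | g y u < g yb u} ⊆ (fun z => yb - z) '' Cdelta p δ)
    (xh : α) (hH : HenigProper X f xh) :
    ∃ u : U, ∀ x ∈ X, g (f xh) u ≤ g (f x) u := by
  obtain ⟨hxX, C, hconv, hcone, _hpointed, hint, hval⟩ := hH
  have hpne : Nonempty (Fin p) := ⟨⟨0, by omega⟩⟩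
  have he : ∀ i : Fin p, Pi.single i (1:ℝ) ∈ interior C := by
    intro i
    apply hint
    constructor
    · intro j
      rcases eq_or_ne j i with h | h
      · subst h; simp
      · simp [Pi.single_apply, h]
    · intro h0
      have := congrFun h0 i
      simp at this
  have hball : ∀ i : Fin p, ∃ ε > 0, Metric.ball (Pi.single i (1:ℝ)) ε ⊆ C := by
    intro i
    obtain ⟨ε, hε, hsub⟩ := Metric.isOpen_iff.1 isOpen_interior _ (he i)
    exact ⟨ε, hε, hsub.trans interior_subset⟩
  choose εf hεf hsub using hball
  obtain ⟨ε, hεpos, hεle⟩ : ∃ ε > 0, ∀ i, ε ≤ εf i := by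
    refine ⟨Finset.univ.inf' ⟨hpne.some, Finset.mem_univ _⟩ εf, ?_, ?_⟩
    · exact (Finset.lt_inf'_iff _).2 fun i _ => hεf i
    · intro i; exact Finset.inf'_le _ (Finset.mem_univ i)
  set δ := ε/2 with hδdef
  have hδpos : 0 < δ := by positivity
  have h0C : (0 : Fin p → ℝ) ∈ C := by
    have := hcone 0 le_rfl _ (interior_subset (he hpne.some))
    simpa using this
  have haddC : ∀ a ∈ C, ∀ b ∈ C, a + b ∈ C := by
    intro a ha b hb
    have hm : (1/2 : ℝ) • a + (1/2 : ℝ) • b ∈ C :=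
      hconv ha hb (by norm_num) (by norm_num) (by norm_num)
    have := hcone 2 (by norm_num) _ hm
    simpa [smul_add, smul_smul] using this
  have hden : (0:ℝ) < 1 + p * δ := by positivity
  set β := δ / (1 + p * δ) with hβdef
  have hβpos : 0 < β := by positivity
  have hβlt : β < ε := by
    have h1 : β ≤ δ := by
      rw [hβdef]
      rw [div_le_iff₀ hden]
      nlinarith [mul_nonneg (Nat.cast_nonneg p : (0:ℝ) ≤ p) hδpos.le, hδpos.le]
    calc β ≤ δ := h1
      _ < ε := by rw [hδdef]; linarith
  -- the generators
  set v : Fin p → (Fin p → ℝ) := fun i => Pi.single i 1 - Function.const _ β with hvdef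
  have hvC : ∀ i, v i ∈ C := by
    intro i
    apply hsub i
    rw [Metric.mem_ball]
    have : v i - Pi.single i 1 = Function.const (Fin p) (-β) := by
      rw [hvdef]; funext j; simp [Function.const]
    rw [dist_eq_norm, this]
    have hn : ‖Function.const (Fin p) (-β)‖ ≤ β := by
      have h := pi_norm_const_le (ι := Fin p) (-β)
      have heq : Function.const (Fin p) (-β) = fun _ : Fin p => -β := rfl
      rw [heq]
      calc ‖fun _ : Fin p => -β‖ ≤ ‖(-β : ℝ)‖ := h
        _ = β := by simp [abs_of_pos hβpos]
    exact lt_of_le_of_lt hn (lt_of_lt_of_le hβlt (hεle i))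
  have hCd : Cdelta p δ ⊆ C := by
    intro y hy
    set s := ∑ j, y j with hsdef
    have hyi : ∀ i, 0 ≤ y i + δ * s := hy
    have hsum : ∑ i, (y i + δ * s) = s * (1 + p * δ) := by
      rw [Finset.sum_add_distrib]
      simp [← hsdef, Finset.card_univ]
      ring
    have hs : 0 ≤ s := by
      have h1 : 0 ≤ ∑ i, (y i + δ * s) :=
        Finset.sum_nonneg fun i _ => hyi i
      rw [hsum] at h1
      nlinarith
    have hrepr : y = ∑ i, (y i + δ * s) • v i := by
      funext j
      have : (∑ i, (y i + δ * s) • v i) j = ∑ i, (y i + δ * s) * (v i j) := by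
        simp [Finset.sum_apply]
      rw [this]
      have hvij : ∀ i, v i j = (Pi.single i 1 : Fin p → ℝ) j - β := by
        intro i; rw [hvdef]; simp [Function.const]
      simp_rw [hvij, mul_sub]
      rw [Finset.sum_sub_distrib]
      have h1 : ∑ i, (y i + δ * s) * (Pi.single i 1 : Fin p → ℝ) j = y j + δ * s := by
        simp [Pi.single_apply, mul_ite, Finset.sum_ite_eq]
      have h2 : ∑ i, (y i + δ * s) * β = s * (1 + p * δ) * β := by
        rw [← Finset.sum_mul, hsum]
      rw [h1, h2, hβdef]
      field_simp
      ring
    rw [hrepr]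
    have : ∀ t : Finset (Fin p), (∑ i ∈ t, (y i + δ * s) • v i) ∈ C := by
      intro t
      induction t using Finset.induction with
      | empty => simpa using h0C
      | insert _ _ hni ih =>
        rw [Finset.sum_insert hni]
        exact haddC _ (hcone _ (hyi _) _ (hvC _)) _ ih
    exact this Finset.univ
  obtain ⟨u, hu⟩ := hcond (f xh) (hfY xh hxX) δ hδpos
  refine ⟨u, ?_⟩
  intro x hx
  by_contra hle
  rw [not_le] at hle
  obtain ⟨z, hz, hzeq⟩ := hu ⟨hfY x hx, hle⟩
  have hmem : f x ∈ (f '' X) ∩ ((fun c => f xh - c) '' C) :=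
    ⟨⟨x, hx, rfl⟩, ⟨z, hCd hz, hzeq⟩⟩
  rw [hval] at hmem
  rw [Set.mem_singleton_iff] at hmem
  rw [hmem] at hle
  exact lt_irrefl _ hle
end

section
/- If x̄ is a Henig properly efficient solution of min_{x∈X} f(x), then for every ε ∈ ℝ^p the set {f(x) : x ∈ X, f(x) ≤ ε componentwise} is bounded. -/
theorem stmt10 {α : Type*} {p : ℕ} (hp : 2 ≤ p) (X : Set α) (f : α → Fin p → ℝ)
    (xb : α) (hH : HenigProper X f xb) (ε : Fin p → ℝ) :
    Bornology.IsBounded {y : Fin p → ℝ | ∃ x ∈ X, f x = y ∧ ∀ i, y i ≤ ε i} := by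
  obtain ⟨hxbX, C, hconv, hcone, _hpt, hint, hins⟩ := hH
  have hpne : Nonempty (Fin p) := ⟨⟨0, by omega⟩⟩
  set S := {y : Fin p → ℝ | ∃ x ∈ X, f x = y ∧ ∀ i, y i ≤ ε i} with hS
  have hsingle : ∀ k : Fin p, Pi.single k (1:ℝ) ∈ Pos p \ {0} := by
    intro k
    constructor
    · intro i
      rcases eq_or_ne i k with h | h
      · subst h; rw [Pi.single_eq_same]; norm_num
      · rw [Pi.single_eq_of_ne h]
    · intro h
      have h2 := congrFun (Set.mem_singleton_iff.mp h) k
      rw [Pi.single_eq_same] at h2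
      norm_num at h2
  have hC0 : (0 : Fin p → ℝ) ∈ C := by
    have h1 := interior_subset (hint (hsingle (Classical.arbitrary (Fin p))))
    simpa using hcone 0 le_rfl _ h1
  have hPosC : Pos p ⊆ C := by
    intro y hy
    by_cases h : y = 0
    · exact h ▸ hC0
    · exact interior_subset (hint ⟨hy, h⟩)
  have hadd : ∀ a ∈ C, ∀ b ∈ C, a + b ∈ C := by
    intro a ha b hb
    have h1 := hconv ha hb (by norm_num : (0:ℝ) ≤ 1/2) (by norm_num : (0:ℝ) ≤ 1/2) (by norm_num)
    have h2 := hcone 2 (by norm_num) _ h1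
    have : a + b = (2:ℝ) • ((1/2 : ℝ) • a + (1/2 : ℝ) • b) := by module
    rwa [this]
  set m : ℝ := 1 + ∑ i, |ε i - f xb i| with hm
  have hm0 : 0 ≤ m := by positivity
  have hmi : ∀ i, ε i - f xb i ≤ m := by
    intro i
    have h1 : |ε i - f xb i| ≤ ∑ j, |ε j - f xb j| :=
      Finset.single_le_sum (f := fun j => |ε j - f xb j|) (fun j _ => abs_nonneg _) (Finset.mem_univ i)
    have := le_abs_self (ε i - f xb i)
    simp only [hm]; linarith
  have key : ∀ k : Fin p, ∃ T : ℝ, 0 ≤ T ∧ ∀ y ∈ S, f xb k - T ≤ y k := by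
    intro k
    have hk : Pi.single k (1:ℝ) ∈ interior C := hint (hsingle k)
    obtain ⟨r, hr, hball⟩ := Metric.isOpen_iff.1 isOpen_interior _ hk
    refine ⟨2*m/r + 1, by positivity, ?_⟩
    intro y hy
    by_contra hlt
    push_neg at hlt
    obtain ⟨x, hxX, hfx, hyε⟩ := hy
    set v : Fin p → ℝ := f xb - y with hv
    have hvk : 2*m/r + 1 < v k := by
      simp only [hv, Pi.sub_apply]; linarith
    set t : ℝ := 2*m/r with ht
    have ht0 : 0 ≤ t := by positivity
    have hu : Pi.single k (1:ℝ) - (r/2) • (fun _ => (1:ℝ)) ∈ C := by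
      apply interior_subset
      apply hball
      rw [Metric.mem_ball, dist_eq_norm]
      have : Pi.single k (1:ℝ) - (r/2) • (fun _ => (1:ℝ)) - Pi.single k 1
          = -((r/2) • (fun _ => (1:ℝ))) := by abel
      rw [this, norm_neg, norm_smul]
      have h1 : ‖(fun _ : Fin p => (1:ℝ))‖ = 1 := by
        rw [pi_norm_const (1:ℝ)]; exact norm_one
      rw [h1, Real.norm_eq_abs, abs_of_pos (by linarith), mul_one]
      linarith
    have hcC : t • (Pi.single k (1:ℝ) - (r/2) • (fun _ => (1:ℝ))) ∈ C := hcone t ht0 _ hu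
    have htr : t * (r/2) = m := by rw [ht]; field_simp
    set w : Fin p → ℝ := v - t • (Pi.single k (1:ℝ) - (r/2) • (fun _ => (1:ℝ))) with hw
    have hwPos : w ∈ Pos p := by
      intro i
      have hwi : w i = v i - t * ((Pi.single k 1 : Fin p → ℝ) i) + m := by
        simp only [hw, Pi.sub_apply, Pi.smul_apply, smul_eq_mul]
        have : t * ((Pi.single k 1 : Fin p → ℝ) i - r/2 * 1) = t * (Pi.single k 1 : Fin p → ℝ) i - m := by
          rw [mul_sub]; rw [show t * (r/2 * 1) = m by rw [← htr]; ring]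
        rw [this]; ring
      rw [hwi]
      have hvi : f xb i - ε i ≤ v i := by
        simp only [hv, Pi.sub_apply]; linarith [hyε i]
      rcases eq_or_ne i k with h | h
      · subst h
        simp only [Pi.single_eq_same, mul_one]
        linarith [hmi i]
      · simp only [Pi.single_eq_of_ne h, mul_zero]
        linarith [hmi i]
    have hvC : v ∈ C := by
      have h1 := hadd _ hcC _ (hPosC hwPos)
      have : t • (Pi.single k (1:ℝ) - (r/2) • (fun _ => (1:ℝ))) + w = v := by
        simp only [hw]; abel
      rwa [this] at h1
    have hyint : y ∈ (f '' X) ∩ ((fun c => f xb - c) '' C) := by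
      refine ⟨⟨x, hxX, hfx⟩, ⟨v, hvC, ?_⟩⟩
      simp only [hv]; abel
    rw [hins] at hyint
    have : v k = 0 := by
      simp only [Set.mem_singleton_iff] at hyint
      simp [hv, hyint]
    linarith
  choose T hT0 hTb using key
  set R : ℝ := ∑ i, (|ε i| + |f xb i| + T i) with hR
  have hR0 : 0 ≤ R := Finset.sum_nonneg fun i _ =>
    add_nonneg (add_nonneg (abs_nonneg _) (abs_nonneg _)) (hT0 i)
  apply Bornology.IsBounded.subset (Metric.isBounded_closedBall (x := (0 : Fin p → ℝ)) (r := R))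
  intro y hy
  rw [Metric.mem_closedBall, dist_zero_right, pi_norm_le_iff_of_nonneg hR0]
  intro i
  rw [Real.norm_eq_abs, abs_le]
  obtain ⟨x, hxX2, hfx2, hyε2⟩ := hy
  have h1 : y i ≤ ε i := hyε2 i
  have h2 : f xb i - T i ≤ y i := hTb i y ⟨x, hxX2, hfx2, hyε2⟩
  have hterm : |ε i| + |f xb i| + T i ≤ R :=
    Finset.single_le_sum (f := fun j => |ε j| + |f xb j| + T j)
      (fun j _ => add_nonneg (add_nonneg (abs_nonneg _) (abs_nonneg _)) (hT0 j)) (Finset.mem_univ i)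
  have h3 := le_abs_self (ε i)
  have h4 := neg_abs_le (f xb i)
  constructor <;> nlinarith [abs_nonneg (ε i), abs_nonneg (f xb i), hT0 i]
end

section
/- Fix x̄ ∈ X. If the Benson scalarization problem min { Σ_{i=1}^p f_i(x) : x ∈ X, f(x) ≤ f(x̄) componentwise } is unbounded below, then the multi-objective problem min_{x∈X} f(x) has no Henig properly efficient solution. -/
theorem stmt12 {α : Type*} {p : ℕ} (hp : 2 ≤ p) (X : Set α) (f : α → Fin p → ℝ)
    (xb : α) (hxb : xb ∈ X)
    (hunb : ∀ m : ℝ, ∃ x ∈ X, (∀ i, f x i ≤ f xb i) ∧ ∑ i, f x i < m) :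
    ¬ ∃ xh : α, HenigProper X f xh := by
  rintro ⟨xh, hxhX, C, hconv, hcone, hpoint, hint, himg⟩
  have hp0 : 0 < p := by omega
  set e : Fin p → (Fin p → ℝ) := fun i => Pi.single i 1 with he
  have heint : ∀ i, e i ∈ interior C := by
    intro i
    apply hint
    constructor
    · intro j
      by_cases h : j = i <;> simp [he, Pi.single_apply, h]
    · simp only [Set.mem_singleton_iff]
      intro h
      have := congrFun h i
      simp [he] at this
  have hball : ∀ i, ∃ ε > 0, Metric.ball (e i) ε ⊆ C := by
    intro i
    obtain ⟨ε, hε, hsub⟩ := Metric.isOpen_iff.1 isOpen_interior (e i) (heint i)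
    exact ⟨ε, hε, hsub.trans interior_subset⟩
  choose ε hεpos hεsub using hball
  set a : Fin p → ℝ := f xh - f xb with ha
  set B : ℝ := ∑ i, ‖a‖ / ε i with hB
  have hBnn : ∀ i, ‖a‖ / ε i ≤ B := by
    intro i
    apply Finset.single_le_sum (f := fun i => ‖a‖ / ε i) (fun j _ => _) (Finset.mem_univ i)
    intro j _
    exact div_nonneg (norm_nonneg a) (hεpos j).le
  have hB0 : 0 ≤ B := by
    apply Finset.sum_nonneg
    intro j _
    exact div_nonneg (norm_nonneg a) (hεpos j).le
  obtain ⟨x, hxX, hle, hsum⟩ := hunb (min ((∑ i, f xb i) - B - 1) (∑ i, f xh i))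
  set s : ℝ := ∑ i, (f xb i - f x i) with hs
  have hsval : s = (∑ i, f xb i) - (∑ i, f x i) := by
    rw [hs, Finset.sum_sub_distrib]
  have hBs : B < s := by
    have h1 : (∑ i, f x i) < (∑ i, f xb i) - B - 1 := lt_of_lt_of_le hsum (min_le_left _ _)
    rw [hsval]; linarith
  have hs0 : 0 < s := by linarith
  -- each generator is in C
  have hgen : ∀ i, e i + s⁻¹ • a ∈ C := by
    intro i
    apply hεsub i
    rw [Metric.mem_ball, dist_eq_norm]
    have : e i + s⁻¹ • a - e i = s⁻¹ • a := by abel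
    rw [this, norm_smul, Real.norm_eq_abs, abs_of_pos (inv_pos.2 hs0)]
    rw [inv_mul_eq_div, div_lt_iff₀ hs0]
    have h2 : ‖a‖ ≤ ε i * (‖a‖ / ε i) := by
      rw [mul_div_cancel₀ _ (hεpos i).ne']
    calc ‖a‖ ≤ ε i * (‖a‖ / ε i) := h2
      _ ≤ ε i * B := by
          exact mul_le_mul_of_nonneg_left (hBnn i) (hεpos i).le
      _ < ε i * s := by exact mul_lt_mul_of_pos_left hBs (hεpos i)
  -- C closed under addition and contains 0
  have hadd : ∀ u v : Fin p → ℝ, u ∈ C → v ∈ C → u + v ∈ C := by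
    intro u v hu hv
    have hmid : (1/2 : ℝ) • u + (1/2 : ℝ) • v ∈ C :=
      hconv hu hv (by norm_num) (by norm_num) (by norm_num)
    have h2 := hcone 2 (by norm_num) _ hmid
    have : (2 : ℝ) • ((1/2 : ℝ) • u + (1/2 : ℝ) • v) = u + v := by
      rw [smul_add, smul_smul, smul_smul]; norm_num
    rwa [this] at h2
  have h0C : (0 : Fin p → ℝ) ∈ C := by
    have := hcone 0 le_rfl (e ⟨0, hp0⟩) (interior_subset (heint ⟨0, hp0⟩))
    rwa [zero_smul] at this
  have hvC : f xh - f x ∈ C := by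
    have key : f xh - f x = ∑ i, (f xb i - f x i) • (e i + s⁻¹ • a) := by
      funext j
      simp only [Finset.sum_apply, Pi.smul_apply, Pi.add_apply, smul_eq_mul, Pi.sub_apply]
      have : ∀ i, (f xb i - f x i) * (e i j + s⁻¹ * a j)
          = (f xb i - f x i) * e i j + (f xb i - f x i) * (s⁻¹ * a j) := fun i => mul_add _ _ _
      rw [Finset.sum_congr rfl (fun i _ => this i), Finset.sum_add_distrib]
      have h1 : ∑ i, (f xb i - f x i) * e i j = f xb j - f x j := by
        simp [he, Pi.single_apply, Finset.sum_ite_eq', mul_comm]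
      have h2 : ∑ i, (f xb i - f x i) * (s⁻¹ * a j) = s * (s⁻¹ * a j) := by
        rw [← Finset.sum_mul, ← hs]
      rw [h1, h2, ← mul_assoc, mul_inv_cancel₀ hs0.ne', one_mul]
      simp [ha]
    rw [key]
    apply Finset.sum_induction _ (· ∈ C) hadd h0C
    intro i _
    exact hcone _ (by linarith [hle i]) _ (hgen i)
  have hmem : f x ∈ (f '' X) ∩ ((fun c => f xh - c) '' C) := by
    refine ⟨⟨x, hxX, rfl⟩, ⟨f xh - f x, hvC, ?_⟩⟩
    simp
  rw [himg] at hmem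
  have heq : f x = f xh := hmem
  have hlt : (∑ i, f x i) < ∑ i, f xh i := lt_of_lt_of_le hsum (min_le_right _ _)
  rw [heq] at hlt
  exact lt_irrefl _ hlt
end

section
/- Let a ∈ ℝ^p and r ∈ ℝ^p_+ \ {0}. If the Pascoletti–Serafini problem min { t : t ∈ ℝ, x ∈ X, f(x) ≤ a + t r componentwise } is feasible and unbounded below, then the multi-objective problem min_{x∈X} f(x) has no Henig properly efficient solution. -/
lemma cone_add_mem {p : ℕ} {C : Set (Fin p → ℝ)} (hconv : Convex ℝ C)
    (hcone : ∀ t : ℝ, 0 ≤ t → ∀ c ∈ C, t • c ∈ C)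
    {x y : Fin p → ℝ} (hx : x ∈ C) (hy : y ∈ C) : x + y ∈ C := by
  have hmid : (1/2 : ℝ) • x + (1/2 : ℝ) • y ∈ C :=
    hconv hx hy (by norm_num) (by norm_num) (by norm_num)
  have h2 := hcone 2 (by norm_num) _ hmid
  have : (2:ℝ) • ((1/2 : ℝ) • x + (1/2 : ℝ) • y) = x + y := by
    rw [smul_add, smul_smul, smul_smul]; norm_num
  rwa [this] at h2

theorem stmt13 {α : Type*} {p : ℕ} (hp : 2 ≤ p) (X : Set α) (f : α → Fin p → ℝ)
    (a : Fin p → ℝ) (r : Fin p → ℝ) (hr : (∀ i, 0 ≤ r i) ∧ r ≠ 0)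
    (hfeas : ∃ t : ℝ, ∃ x ∈ X, ∀ i, f x i ≤ a i + t * r i)
    (hunb : ∀ m : ℝ, ∃ t : ℝ, ∃ x ∈ X, (∀ i, f x i ≤ a i + t * r i) ∧ t < m) :
    ¬ ∃ xh : α, HenigProper X f xh := by
  rintro ⟨xh, hxhX, C, hconv, hcone, hpt, hint, heq⟩
  obtain ⟨hrpos, hrne⟩ := hr
  obtain ⟨i0, hi0⟩ : ∃ i, r i ≠ 0 := by
    by_contra h; push_neg at h; exact hrne (funext h)
  have hri0 : 0 < r i0 := lt_of_le_of_ne (hrpos i0) (Ne.symm hi0)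
  have hrC : r ∈ interior C := hint ⟨hrpos, by simpa using hrne⟩
  obtain ⟨ε, εpos, hball⟩ := Metric.isOpen_iff.mp isOpen_interior r hrC
  set v : Fin p → ℝ := f xh - a with hv
  set m : ℝ := min ((f xh i0 - a i0) / r i0) (-(‖v‖ / ε) - 1) with hm
  obtain ⟨t, x, hxX, hfx, htm⟩ := hunb m
  have ht1 : t < (f xh i0 - a i0) / r i0 := lt_of_lt_of_le htm (min_le_left _ _)
  have ht2 : t < -(‖v‖ / ε) - 1 := lt_of_lt_of_le htm (min_le_right _ _)
  have hnv : 0 ≤ ‖v‖ / ε := div_nonneg (norm_nonneg v) εpos.le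
  have hsneg : 0 < -t := by linarith
  have htne : (-t) ≠ 0 := ne_of_gt hsneg
  -- (-t) • r + v ∈ C
  have hc1 : (-t) • r + v ∈ C := by
    have hmem : r + (-t)⁻¹ • v ∈ Metric.ball r ε := by
      rw [Metric.mem_ball, dist_eq_norm]
      have : r + (-t)⁻¹ • v - r = (-t)⁻¹ • v := by abel
      rw [this, norm_smul, norm_inv, Real.norm_eq_abs, abs_of_pos hsneg]
      rw [inv_mul_lt_iff₀ hsneg]
      have : ‖v‖ < ε * (‖v‖ / ε + 1) := by
        rw [mul_add, mul_div_cancel₀ _ (ne_of_gt εpos)]; linarith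
      calc ‖v‖ < ε * (‖v‖ / ε + 1) := this
        _ ≤ -t * ε := by nlinarith
    have hC : r + (-t)⁻¹ • v ∈ C := interior_subset (hball hmem)
    have := hcone (-t) hsneg.le _ hC
    have heq2 : (-t) • (r + (-t)⁻¹ • v) = (-t) • r + v := by
      rw [smul_add, smul_inv_smul₀ htne]
    rwa [heq2] at this
  set d : Fin p → ℝ := a + t • r - f x with hd
  have hdPos : d ∈ Pos p := by
    intro i
    have := hfx i
    simp only [hd, Pi.sub_apply, Pi.add_apply, Pi.smul_apply, smul_eq_mul]
    linarith
  have hcC : f xh - f x ∈ C := by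
    have hdecomp : f xh - f x = ((-t) • r + v) + d := by
      simp only [hv, hd]; module
    by_cases hd0 : d = 0
    · rw [hdecomp, hd0, add_zero]; exact hc1
    · have hdC : d ∈ C := interior_subset (hint ⟨hdPos, hd0⟩)
      rw [hdecomp]; exact cone_add_mem hconv hcone hc1 hdC
  have hmem : f x ∈ (f '' X) ∩ ((fun c => f xh - c) '' C) := by
    refine ⟨⟨x, hxX, rfl⟩, ⟨f xh - f x, hcC, by simp⟩⟩
  rw [heq] at hmem
  have hfeq : f x = f xh := hmem
  have h1 : f x i0 ≤ a i0 + t * r i0 := hfx i0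
  have h2 : t * r i0 < f xh i0 - a i0 := (lt_div_iff₀ hri0).mp ht1
  rw [hfeq] at h1
  linarith
end

section
/- The bi-objective problem of minimizing (−e^x, −e^{−x}) over x ∈ ℝ has no Geoffrion properly efficient solution, although every x ∈ ℝ is an efficient solution. -/
theorem stmt14 :
    (∀ x : ℝ, Efficient (Set.univ : Set ℝ)
      (fun x => ![-Real.exp x, -Real.exp (-x)]) x) ∧
    ¬ ∃ x : ℝ, GeoffrionProper (Set.univ : Set ℝ)
      (fun x => ![-Real.exp x, -Real.exp (-x)]) x := by
  constructor
  · intro xb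
    refine ⟨trivial, ?_⟩
    rintro ⟨x, -, h, hne⟩
    have h0 := h 0
    have h1 := h 1
    simp only [Matrix.cons_val_zero, Matrix.cons_val_one, Matrix.head_cons, neg_le_neg_iff] at h0 h1
    have hx : x = xb := le_antisymm
      (neg_le_neg_iff.mp (Real.exp_le_exp.mp h1)) (Real.exp_le_exp.mp h0)
    exact hne (by rw [hx])
  · rintro ⟨xb, -, M, hM, hcond⟩
    set x := Real.log (Real.exp xb + M * Real.exp (-xb) + 1) with hxdef
    have hpos : 0 < Real.exp xb + M * Real.exp (-xb) + 1 := by positivity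
    have hex : Real.exp x = Real.exp xb + M * Real.exp (-xb) + 1 := Real.exp_log hpos
    have hlt : Real.exp xb < Real.exp x := by
      rw [hex]; nlinarith [Real.exp_pos (-xb)]
    have hcmp : (fun x => ![-Real.exp x, -Real.exp (-x)]) x 0 <
        (fun x => ![-Real.exp x, -Real.exp (-x)]) xb 0 := by
      simpa using hlt
    obtain ⟨j, hj1, hj2⟩ := hcond 0 x trivial hcmp
    fin_cases j
    · simp only [Fin.mk_zero, Fin.mk_one, Fin.isValue, Matrix.cons_val_zero] at hj1
      linarith
    · simp only [Fin.mk_zero, Fin.mk_one, Fin.isValue, Matrix.cons_val_zero, Matrix.cons_val_one, Matrix.head_cons] at hj1 hj2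
      -- hj1 : -exp(-xb) < -exp(-x), hj2 : ratio ≤ M
      have hd : (0:ℝ) < -Real.exp (-x) - -Real.exp (-xb) := by linarith
      have hnum := (div_le_iff₀ hd).mp hj2
      have hdle : -Real.exp (-x) - -Real.exp (-xb) ≤ Real.exp (-xb) := by
        have := Real.exp_pos (-x); linarith
      nlinarith [Real.exp_pos (-x), Real.exp_pos (-xb)]
end

section
/- Suppose every x ∈ X satisfies f(x) > 0 componentwise, with y^I defined by y^I_i = inf_{x∈X} f_i(x) > 0, and let l be a positive integer. Then x̄ ∈ X is a Geoffrion properly efficient solution of min_{x∈X} f(x) if and only if x̄ is a Geoffrion properly efficient solution of min_{x∈X} (f_1(x)^l, …, f_p(x)^l). -/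
lemma geom_sum_le' {n : ℕ} {a b A : ℝ} (hb : 0 ≤ b) (hba : b ≤ a) (haA : a ≤ A) :
    ∑ i ∈ Finset.range n, a ^ i * b ^ (n - 1 - i) ≤ (n : ℝ) * A ^ (n - 1) := by
  have ha : 0 ≤ a := hb.trans hba
  have hA : 0 ≤ A := ha.trans haA
  calc ∑ i ∈ Finset.range n, a ^ i * b ^ (n - 1 - i)
      ≤ ∑ _i ∈ Finset.range n, A ^ (n - 1) := by
        apply Finset.sum_le_sum
        intro i hi
        have hi' : i + (n - 1 - i) = n - 1 := by
          rw [Finset.mem_range] at hi; omega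
        calc a ^ i * b ^ (n - 1 - i)
            ≤ A ^ i * A ^ (n - 1 - i) :=
              mul_le_mul (pow_le_pow_left₀ ha haA i)
                (pow_le_pow_left₀ hb (hba.trans haA) _) (pow_nonneg hb _) (pow_nonneg hA _)
          _ = A ^ (n - 1) := by rw [← pow_add, hi']
    _ = (n : ℝ) * A ^ (n - 1) := by simp [mul_comm]

lemma le_geom_sum' {n : ℕ} {a b c : ℝ} (hc : 0 ≤ c) (hca : c ≤ a) (hcb : c ≤ b) :
    (n : ℝ) * c ^ (n - 1) ≤ ∑ i ∈ Finset.range n, a ^ i * b ^ (n - 1 - i) := by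
  calc (n : ℝ) * c ^ (n - 1) = ∑ _i ∈ Finset.range n, c ^ (n - 1) := by simp [mul_comm]
    _ ≤ ∑ i ∈ Finset.range n, a ^ i * b ^ (n - 1 - i) := by
        apply Finset.sum_le_sum
        intro i hi
        have hi' : i + (n - 1 - i) = n - 1 := by
          rw [Finset.mem_range] at hi; omega
        calc c ^ (n - 1) = c ^ i * c ^ (n - 1 - i) := by rw [← pow_add, hi']
          _ ≤ a ^ i * b ^ (n - 1 - i) :=
            mul_le_mul (pow_le_pow_left₀ hc hca i) (pow_le_pow_left₀ hc hcb _)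
              (pow_nonneg hc _) (pow_nonneg (hc.trans hca) _)

lemma pow_sub_pow_le' {n : ℕ} {a b A : ℝ} (hb : 0 ≤ b) (hba : b ≤ a) (haA : a ≤ A) :
    a ^ n - b ^ n ≤ (n : ℝ) * A ^ (n - 1) * (a - b) := by
  rw [← geom_sum₂_mul]
  exact mul_le_mul_of_nonneg_right (geom_sum_le' hb hba haA) (sub_nonneg.2 hba)

lemma le_pow_sub_pow' {n : ℕ} {a b c : ℝ} (hc : 0 ≤ c) (hca : c ≤ a) (hcb : c ≤ b) (hba : b ≤ a) :
    (n : ℝ) * c ^ (n - 1) * (a - b) ≤ a ^ n - b ^ n := by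
  rw [← geom_sum₂_mul]
  exact mul_le_mul_of_nonneg_right (le_geom_sum' hc hca hcb) (sub_nonneg.2 hba)

theorem stmt17 {α : Type*} {p : ℕ} (hp : 2 ≤ p) (X : Set α) (f : α → Fin p → ℝ)
    (hpos : ∀ x ∈ X, ∀ i, 0 < f x i)
    (yI : Fin p → ℝ) (hyI : ∀ i : Fin p, IsGLB {r : ℝ | ∃ x ∈ X, r = f x i} (yI i))
    (hyIpos : ∀ i, 0 < yI i)
    (l : ℕ) (hl : 0 < l) (xb : α) :
    GeoffrionProper X f xb ↔ GeoffrionProper X (fun x i => f x i ^ l) xb := by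
  haveI : Nonempty (Fin p) := ⟨⟨0, by omega⟩⟩
  have hyIle : ∀ x ∈ X, ∀ i, yI i ≤ f x i := fun x hx i => (hyI i).1 ⟨x, hx, rfl⟩
  set m : ℝ := Finset.univ.inf' Finset.univ_nonempty yI with hm_def
  have hmle : ∀ i, m ≤ yI i := fun i => Finset.inf'_le _ (Finset.mem_univ i)
  have hmpos : 0 < m := by
    rw [hm_def, Finset.lt_inf'_iff]
    exact fun i _ => hyIpos i
  have hmX : ∀ x ∈ X, ∀ i, m ≤ f x i := fun x hx i => (hmle i).trans (hyIle x hx i)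
  have hln : (l : ℝ) ≠ 0 := Nat.cast_ne_zero.2 hl.ne'
  have hlpos : (0:ℝ) < l := Nat.cast_pos.2 hl
  -- efficiency equivalence
  have hEff : Efficient X f xb ↔ Efficient X (fun x i => f x i ^ l) xb := by
    constructor
    · rintro ⟨hxb, hne⟩
      refine ⟨hxb, ?_⟩
      rintro ⟨x, hx, hle, hneq⟩
      refine hne ⟨x, hx, fun i => ?_, ?_⟩
      · exact le_of_pow_le_pow_left₀ hl.ne' (hpos xb hxb i).le (hle i)
      · intro h; exact hneq (by funext i; simp [congrFun h i])
    · rintro ⟨hxb, hne⟩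
      refine ⟨hxb, ?_⟩
      rintro ⟨x, hx, hle, hneq⟩
      refine hne ⟨x, hx, fun i => pow_le_pow_left₀ (hpos x hx i).le (hle i) l, ?_⟩
      intro h
      apply hneq
      funext i
      have := congrFun h i
      simp only at this
      exact le_antisymm (hle i) (le_of_pow_le_pow_left₀ hl.ne' (hpos x hx i).le this.ge)
  constructor
  · rintro ⟨hEf, M, hM, hGeo⟩
    have hxb : xb ∈ X := hEf.1
    set B : ℝ := Finset.univ.sup' Finset.univ_nonempty (f xb) with hB_def
    have hBle : ∀ i, f xb i ≤ B := fun i => Finset.le_sup' _ (Finset.mem_univ i)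
    have hBpos : 0 < B := (hpos xb hxb ⟨0, by omega⟩).trans_le (hBle _)
    refine ⟨hEff.1 hEf, M * B ^ (l - 1) / m ^ (l - 1), by positivity, ?_⟩
    intro i x hx hlt
    have hflt : f x i < f xb i := lt_of_pow_lt_pow_left₀ l (hpos xb hxb i).le hlt
    obtain ⟨j, hj1, hj2⟩ := hGeo i x hx hflt
    refine ⟨j, pow_lt_pow_left₀ hj1 (hpos xb hxb j).le hl.ne', ?_⟩
    have hnum : f xb i ^ l - f x i ^ l ≤ (l : ℝ) * B ^ (l - 1) * (f xb i - f x i) :=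
      pow_sub_pow_le' (hpos x hx i).le hflt.le (hBle i)
    have hden : (l : ℝ) * m ^ (l - 1) * (f x j - f xb j) ≤ f x j ^ l - f xb j ^ l :=
      le_pow_sub_pow' hmpos.le (hmX x hx j) (hmX xb hxb j) hj1.le
    have hdiffj : 0 < f x j - f xb j := sub_pos.2 hj1
    have h1 : (f xb i ^ l - f x i ^ l) / (f x j ^ l - f xb j ^ l) ≤
        ((l : ℝ) * B ^ (l - 1) * (f xb i - f x i)) / ((l : ℝ) * m ^ (l - 1) * (f x j - f xb j)) :=
      div_le_div₀ (mul_nonneg (by positivity) (sub_nonneg.2 hflt.le)) hnum (by positivity) hden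
    have h2 : ((l : ℝ) * B ^ (l - 1) * (f xb i - f x i)) / ((l : ℝ) * m ^ (l - 1) * (f x j - f xb j))
        = (B ^ (l - 1) / m ^ (l - 1)) * ((f xb i - f x i) / (f x j - f xb j)) := by
      field_simp
    calc (f xb i ^ l - f x i ^ l) / (f x j ^ l - f xb j ^ l)
        ≤ (B ^ (l - 1) / m ^ (l - 1)) * ((f xb i - f x i) / (f x j - f xb j)) := by
          rw [← h2]; exact h1
      _ ≤ (B ^ (l - 1) / m ^ (l - 1)) * M := by
          exact mul_le_mul_of_nonneg_left hj2 (by positivity)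
      _ = M * B ^ (l - 1) / m ^ (l - 1) := by ring
  · rintro ⟨hEf, M, hM, hGeo⟩
    have hxb : xb ∈ X := hEf.1
    set B : ℝ := Finset.univ.sup' Finset.univ_nonempty (f xb) with hB_def
    have hBle : ∀ i, f xb i ≤ B := fun i => Finset.le_sup' _ (Finset.mem_univ i)
    have hBpos : 0 < B := (hpos xb hxb ⟨0, by omega⟩).trans_le (hBle _)
    refine ⟨hEff.2 hEf, max B (M * (B + 1) ^ (l - 1) / m ^ (l - 1)),
      lt_max_of_lt_left hBpos, ?_⟩
    intro i x hx hflt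
    have hlt : f x i ^ l < f xb i ^ l := pow_lt_pow_left₀ hflt (hpos x hx i).le hl.ne'
    obtain ⟨j, hj1, hj2⟩ := hGeo i x hx hlt
    simp only at hj1 hj2
    have hjlt : f xb j < f x j := lt_of_pow_lt_pow_left₀ l (hpos x hx j).le hj1
    refine ⟨j, hjlt, ?_⟩
    rcases le_or_gt 1 (f x j - f xb j) with hc | hc
    · calc (f xb i - f x i) / (f x j - f xb j)
          ≤ f xb i - f x i := div_le_self (by linarith) hc
        _ ≤ B := le_trans (by linarith [hpos x hx i]) (hBle i)
        _ ≤ _ := le_max_left _ _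
    · have hxjB : f x j ≤ B + 1 := by linarith [hBle j]
      have hnum : (l : ℝ) * m ^ (l - 1) * (f xb i - f x i) ≤ f xb i ^ l - f x i ^ l :=
        le_pow_sub_pow' hmpos.le (hmX xb hxb i) (hmX x hx i) hflt.le
      have hden : f x j ^ l - f xb j ^ l ≤ (l : ℝ) * (B + 1) ^ (l - 1) * (f x j - f xb j) :=
        pow_sub_pow_le' (hpos xb hxb j).le hjlt.le hxjB
      have hpowj : 0 < f x j ^ l - f xb j ^ l := sub_pos.2 hj1
      have hpowi : 0 < f xb i ^ l - f x i ^ l := sub_pos.2 hlt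
      have hdiffj : 0 < f x j - f xb j := sub_pos.2 hjlt
      have h1 : (f xb i - f x i) / (f x j - f xb j) ≤
          ((f xb i ^ l - f x i ^ l) / ((l : ℝ) * m ^ (l - 1))) /
            ((f x j ^ l - f xb j ^ l) / ((l : ℝ) * (B + 1) ^ (l - 1))) := by
        apply div_le_div₀ (by positivity)
        · rw [le_div_iff₀ (by positivity)]
          linarith [hnum]
        · positivity
        · rw [div_le_iff₀ (by positivity)]
          linarith [hden]
      have h2 : ((f xb i ^ l - f x i ^ l) / ((l : ℝ) * m ^ (l - 1))) /
            ((f x j ^ l - f xb j ^ l) / ((l : ℝ) * (B + 1) ^ (l - 1)))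
          = ((B + 1) ^ (l - 1) / m ^ (l - 1)) *
            ((f xb i ^ l - f x i ^ l) / (f x j ^ l - f xb j ^ l)) := by
        field_simp
      calc (f xb i - f x i) / (f x j - f xb j)
          ≤ ((B + 1) ^ (l - 1) / m ^ (l - 1)) *
            ((f xb i ^ l - f x i ^ l) / (f x j ^ l - f xb j ^ l)) := by rw [← h2]; exact h1
        _ ≤ ((B + 1) ^ (l - 1) / m ^ (l - 1)) * M :=
            mul_le_mul_of_nonneg_left hj2 (by positivity)
        _ = M * (B + 1) ^ (l - 1) / m ^ (l - 1) := by ring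
        _ ≤ _ := le_max_right _ _
end

section
/- Consider the bi-objective problem min (x, 1−x) over 0 ≤ x ≤ 1 and its transform min (x², (1−x)⁴) over 0 ≤ x ≤ 1 via φ(y₁,y₂) = (y₁², y₂⁴). The point x̄ = 1 is a Geoffrion properly efficient solution of the original problem but is not a Geoffrion properly efficient solution of the transformed problem. -/
theorem stmt18 :
    GeoffrionProper (Set.Icc (0 : ℝ) 1) (fun x => ![x, 1 - x]) 1 ∧
    ¬ GeoffrionProper (Set.Icc (0 : ℝ) 1) (fun x => ![x ^ 2, (1 - x) ^ 4]) 1 := by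
  constructor
  · constructor
    · constructor
      · exact Set.right_mem_Icc.mpr zero_le_one
      · rintro ⟨x, hx, hle, hne⟩
        have h1 := hle 1
        simp only [Matrix.cons_val_one, Matrix.head_cons, Matrix.cons_val_zero] at h1
        have hx1 : x = 1 := le_antisymm hx.2 (by linarith)
        subst hx1
        exact hne rfl
    · refine ⟨1, one_pos, ?_⟩
      intro i x hx hlt
      fin_cases i
      · simp only [Fin.mk_zero, Fin.isValue, Matrix.cons_val_zero] at hlt ⊢
        refine ⟨1, ?_, ?_⟩
        · simp only [Matrix.cons_val_one, Matrix.head_cons, Matrix.cons_val_zero]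
          linarith
        · simp only [Fin.isValue, Matrix.cons_val_zero, Matrix.cons_val_one, Matrix.head_cons]
          rw [show (1:ℝ) - x - (1 - 1) = 1 - x by ring, show (1:ℝ) - x = 1 - x by ring,
            div_self (by intro h; linarith [hlt] : (1:ℝ) - x ≠ 0)]
      · simp only [Fin.mk_one, Fin.isValue, Matrix.cons_val_one, Matrix.head_cons, Matrix.cons_val_zero] at hlt
        exfalso; have := hx.2; linarith
  · rintro ⟨_, M, hM, hprop⟩
    set ε : ℝ := min (1/2) (1/(M+1)) with hε
    have hM1 : (0:ℝ) < M + 1 := by linarith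
    have hε0 : 0 < ε := lt_min (by norm_num) (by positivity)
    have hε12 : ε ≤ 1/2 := min_le_left _ _
    have hεM : (M+1) * ε ≤ 1 := by
      have := min_le_right (1/2 : ℝ) (1/(M+1))
      calc (M+1) * ε ≤ (M+1) * (1/(M+1)) := by nlinarith
        _ = 1 := by field_simp
    obtain ⟨j, hj1, hj2⟩ := hprop 0 (1 - ε) ⟨by linarith, by linarith⟩
      (by simp only [Matrix.cons_val_zero]; nlinarith)
    fin_cases j
    · simp only [Fin.mk_zero, Fin.isValue, Matrix.cons_val_zero] at hj1
      nlinarith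
    · simp only [Fin.mk_one, Fin.mk_zero, Fin.isValue, Matrix.cons_val_zero,
        Matrix.cons_val_one, Matrix.head_cons] at hj1 hj2
      have he : (1:ℝ) - (1 - ε) = ε := by ring
      rw [he] at hj1 hj2
      have hd : (0:ℝ) < ε ^ 4 - (1 - 1) ^ 4 := by
        have : ((1:ℝ) - 1) ^ 4 = 0 := by norm_num
        rw [this]; simpa using pow_pos hε0 4
      rw [div_le_iff₀ hd] at hj2
      nlinarith [pow_pos hε0 4, pow_pos hε0 3, sq_nonneg ε, sq_nonneg (ε - 1)]
end
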